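/- arXiv:2002.08228 — 5 statements merged into one kernel-verified Lean document; each statement's English description precedes it below -/
import Mathlib

section
/- Every real number can be written as the sum of two Liouville numbers. -/
/-! Liouville numbers form a residual set, and so does its image under the homeomorphism
`x ↦ ξ - x`; by the Baire category theorem the two sets meet. -/

open Filter

theorem exists_add_eq_of_eventually_residual {G : Type*} [AddGroup G] [TopologicalSpace G]
    [IsTopologicalAddGroup G] [BaireSpace G] [Nonempty G] {p : G → Prop}
    (hp : ∀ᶠ x in residual G, p x) (g : G) : ∃ x y, p x ∧ p y ∧ x + y = g := by
  have hp_sub : ∀ᶠ x in residual G, p (-x + g) := by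
    rw [← ((Homeomorph.neg G).trans (Homeomorph.addRight g)).residual_map_eq] at hp
    exact eventually_map.mp hp
  obtain ⟨x, hx, hx'⟩ := (dense_of_mem_residual (hp.and hp_sub)).nonempty
  exact ⟨x, -x + g, hx, hx', add_neg_cancel_left x g⟩

/-- Every real number can be written as the sum of two Liouville numbers. -/
theorem sum_of_two_liouville (ξ : ℝ) :
    ∃ x y : ℝ, Liouville x ∧ Liouville y ∧ x + y = ξ :=
  exists_add_eq_of_eventually_residual eventually_residual_liouville ξ
end

section
/- For any integer n ≥ 1, for every real vector (ξ₁, …, ξ_{n-1}) ∈ ℝ^{n-1} there exist Liouville numbers x₀, x₁, …, x_{n-1} such that x₀ + x_i = ξ_i for every 1 ≤ i ≤ n-1. Equivalently, the map Ψ : 𝓛^n → ℝ^{n-1} given by Ψ(x₀,…,x_{n-1}) = (x₀+x₁, …, x₀+x_{n-1}) is surjective. -/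
/-! The Liouville numbers form a comeagre subset of `ℝ`, and so does its preimage under each
homeomorphism `x ↦ ξᵢ - x`. Finitely many comeagre sets meet in a comeagre set, which is dense
by the Baire category theorem, so some `x₀` lies in all of them. -/

open Filter Topology

theorem eventually_residual_liouville_sub (a : ℝ) : ∀ᶠ x in residual ℝ, Liouville (a - x) :=
  (tendsto_residual_of_isOpenMap (continuous_sub_left a) (Homeomorph.subLeft a).isOpenMap).eventually
    eventually_residual_liouville

theorem liouville_sum_map_surjective_general (n : ℕ) (ξ : Fin (n - 1) → ℝ) :
    ∃ x₀ : ℝ, Liouville x₀ ∧ ∀ i : Fin (n - 1), Liouville (ξ i - x₀) := by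
  have hgeneric : ∀ᶠ x in residual ℝ, Liouville x ∧ ∀ i : Fin (n - 1), Liouville (ξ i - x) :=
    eventually_residual_liouville.and
      (eventually_all.2 fun i => eventually_residual_liouville_sub (ξ i))
  exact (dense_of_mem_residual hgeneric).nonempty

/-- For any `n ≥ 1` and any real vector `(ξ₁, …, ξ_{n-1})`, there exist Liouville
numbers `x₀, x₁, …, x_{n-1}` with `x₀ + x_i = ξ_i` for all `1 ≤ i ≤ n-1`; that is,
the sum map `Ψ : 𝓛ⁿ → ℝ^{n-1}` is surjective. -/
theorem liouville_sum_map_surjective (n : ℕ) (hn : 1 ≤ n) (ξ : Fin (n - 1) → ℝ) :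
    ∃ x₀ : ℝ, Liouville x₀ ∧ ∀ i : Fin (n - 1), Liouville (ξ i - x₀) :=
  liouville_sum_map_surjective_general n ξ
end

section
/- For any integer n ≥ 1, the n-fold Cartesian product 𝓛^n of the set of Liouville numbers has packing dimension exactly n. -/
open MeasureTheory Metric

/-- The packing pre-measure of dimension `s` of a set `A`: the limit (infimum over
`δ > 0`) of the supremum over finite `δ`-packings of `A` (finite families of
pairwise disjoint closed balls of radii at most `δ` centered in `A`) of
`∑ (2 r_i)^s`. -/
noncomputable def packingPremeasure {X : Type*} [PseudoMetricSpace X] (s : ℝ)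
    (A : Set X) : ENNReal :=
  ⨅ (δ : ℝ) (_ : 0 < δ),
    ⨆ (t : Finset (X × ℝ))
      (_ : (∀ p ∈ t, p.1 ∈ A ∧ 0 < p.2 ∧ p.2 ≤ δ) ∧
        (t : Set (X × ℝ)).Pairwise fun p q =>
          Disjoint (closedBall p.1 p.2) (closedBall q.1 q.2)),
      ∑ p ∈ t, ENNReal.ofReal ((2 * p.2) ^ s)

/-- The packing measure of dimension `s`: infimum over countable covers of the sum
of packing pre-measures of the pieces. -/
noncomputable def packingMeasure {X : Type*} [PseudoMetricSpace X] (s : ℝ)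
    (A : Set X) : ENNReal :=
  ⨅ (E : ℕ → Set X) (_ : A ⊆ ⋃ i, E i), ∑' i, packingPremeasure s (E i)

/-- The packing dimension of a set. -/
noncomputable def packingDim {X : Type*} [PseudoMetricSpace X] (A : Set X) :
    ENNReal :=
  ⨅ (s : NNReal) (_ : packingMeasure s A = 0), (s : ENNReal)

/-!
For `s > n`, a `δ`-packing of a bounded set `A ⊆ ℝⁿ` satisfies `∑ (2r)^s ≤ (2δ)^(s-n) vol(A_δ)`
with `A_δ` the closed `δ`-neighbourhood of `A`, so the packing premeasure of bounded sets vanishes and every subset of `ℝⁿ` has packing measure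
zero. For `s < n`, the set of Liouville vectors is comeagre, so by Baire's theorem every countable
cover of it has a piece dense in some ball; a grid of `m^n` points of that ball, moved slightly
into the piece, is a packing by balls of radius `≍ 1/m` whose `s`-sum grows like `m^(n-s)`.
-/

open Filter Set Topology

lemma packingDim_le_of_forall_lt {X : Type*} [PseudoMetricSpace X] {A : Set X} {d : NNReal}
    (h : ∀ s : NNReal, d < s → packingMeasure s A = 0) : packingDim A ≤ d :=
  ENNReal.le_of_forall_pos_le_add fun ε hε _ =>
    (iInf₂_le (d + ε) (h _ (lt_add_of_pos_right d hε))).trans_eq (ENNReal.coe_add d ε)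

lemma le_packingDim_of_forall_lt {X : Type*} [PseudoMetricSpace X] {A : Set X} {d : ENNReal}
    (h : ∀ s : NNReal, (s : ENNReal) < d → packingMeasure s A ≠ 0) : d ≤ packingDim A :=
  le_iInf₂ fun s hs => not_lt.1 fun hlt => h s hlt hs

lemma packingPremeasure_eq_top_of_forall_exists_separated {X : Type*} [PseudoMetricSpace X]
    {s : ℝ} {E : Set X}
    (h : ∀ δ > 0, ∀ M : ℝ, ∃ r > 0, r ≤ δ ∧ ∃ t : Finset X, ↑t ⊆ E ∧
      (t : Set X).Pairwise (fun x y => 2 * r < dist x y) ∧ M ≤ t.card * (2 * r) ^ s) :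
    packingPremeasure s E = ⊤ := by
  refine iInf₂_eq_top.2 fun δ hδ => ENNReal.eq_top_of_forall_nnreal_le fun M => ?_
  obtain ⟨r, hr, hrδ, t, htE, hsep, hM⟩ := h δ hδ M
  set balls := t.map (Function.Embedding.sectL X r)
  have hpacking : (∀ p ∈ balls, p.1 ∈ E ∧ 0 < p.2 ∧ p.2 ≤ δ) ∧
      (balls : Set (X × ℝ)).Pairwise fun p q =>
        Disjoint (closedBall p.1 p.2) (closedBall q.1 q.2) := by
    simp only [balls, Finset.coe_map, Finset.mem_map, Function.Embedding.sectL_apply]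
    refine ⟨?_, (Function.Embedding.sectL X r).injective.injOn.pairwise_image.2
      (hsep.mono' fun x y hxy => closedBall_disjoint_closedBall (by simpa [two_mul] using hxy))⟩
    rintro _ ⟨x, hx, rfl⟩
    exact ⟨htE hx, hr, hrδ⟩
  refine le_trans ?_ (le_iSup₂_of_le balls hpacking le_rfl)
  simp only [balls, Finset.sum_map, Function.Embedding.sectL_apply]
  rw [Finset.sum_const, nsmul_eq_mul, ← ENNReal.ofReal_natCast,
    ← ENNReal.ofReal_mul (by positivity), ← ENNReal.ofReal_coe_nnreal]
  exact ENNReal.ofReal_le_ofReal hM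

lemma exists_separated_of_subset_closure {X κ : Type*} [PseudoMetricSpace X] {E : Set X}
    {f : κ → X} (hf : ∀ k, f k ∈ closure E) {r : ℝ} (hr : 0 < r)
    (hsep : Pairwise fun k l => 4 * r ≤ dist (f k) (f l)) :
    ∃ g : κ → X, (∀ k, g k ∈ E) ∧ Pairwise fun k l => 2 * r < dist (g k) (g l) := by
  choose g hgE hfg using fun k => Metric.mem_closure_iff.1 (hf k) r hr
  refine ⟨g, hgE, fun k l hkl => ?_⟩
  have hf := hsep hkl
  have htri := dist_triangle4 (f k) (g k) (g l) (f l)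
  rw [dist_comm (g l)] at htri
  linarith [hfg k, hfg l]

lemma exists_nonempty_interior_closure_of_mem_residual {X κ : Type*} [TopologicalSpace X]
    [BaireSpace X] [Nonempty X] [Countable κ] {A : Set X} (hA : A ∈ residual X)
    {E : κ → Set X} (hcov : A ⊆ ⋃ k, E k) : ∃ k, (interior (closure (E k))).Nonempty := by
  obtain ⟨G, hGA, hG, hGd⟩ := mem_residual.1 hA
  simpa using (hG.dense_iUnion_interior_of_closed hGd (fun k => isClosed_closure)
    (hGA.trans (hcov.trans (iUnion_mono fun k => subset_closure)))).nonempty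

section Euclidean

variable {ι : Type*} [Fintype ι]

lemma packingPremeasure_le_mul_volume_cthickening {s δ : ℝ} (hs : (Fintype.card ι : ℝ) ≤ s)
    (hδ : 0 < δ) (A : Set (ι → ℝ)) :
    packingPremeasure s A ≤
      ENNReal.ofReal ((2 * δ) ^ (s - Fintype.card ι)) * volume (cthickening δ A) := by
  refine (iInf₂_le δ hδ).trans (iSup₂_le fun t ⟨ht, hdisj⟩ => ?_)
  set c := ENNReal.ofReal ((2 * δ) ^ (s - Fintype.card ι))
  calc ∑ q ∈ t, ENNReal.ofReal ((2 * q.2) ^ s)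
      ≤ ∑ q ∈ t, c * volume (closedBall q.1 q.2) := by
        refine Finset.sum_le_sum fun q hq => ?_
        obtain ⟨-, hq0, hqδ⟩ := ht q hq
        rw [Real.volume_pi_closedBall _ hq0.le, ← ENNReal.ofReal_mul (by positivity)]
        refine ENNReal.ofReal_le_ofReal ?_
        calc (2 * q.2) ^ s = (2 * q.2) ^ (s - Fintype.card ι) * (2 * q.2) ^ Fintype.card ι := by
              rw [← Real.rpow_natCast, ← Real.rpow_add (by positivity), sub_add_cancel]
          _ ≤ (2 * δ) ^ (s - Fintype.card ι) * (2 * q.2) ^ Fintype.card ι := by gcongr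
    _ = c * volume (⋃ q ∈ t, closedBall q.1 q.2) := by
        rw [← Finset.mul_sum, measure_biUnion_finset hdisj fun q _ => measurableSet_closedBall]
    _ ≤ c * volume (cthickening δ A) := by
        refine mul_le_mul_right (measure_mono (iUnion₂_subset fun q hq => ?_)) _
        obtain ⟨hqA, -, hqδ⟩ := ht q hq
        exact (closedBall_subset_closedBall hqδ).trans (closedBall_subset_cthickening hqA δ)

lemma packingPremeasure_eq_zero_of_isBounded {s : ℝ} (hs : (Fintype.card ι : ℝ) < s)
    {A : Set (ι → ℝ)} (hA : Bornology.IsBounded A) : packingPremeasure s A = 0 := by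
  set C := volume (cthickening 1 A)
  have hC : C ≠ ⊤ := (hA.cthickening.measure_lt_top).ne
  have hbound : ∀ δ ∈ Ioc (0 : ℝ) 1,
      packingPremeasure s A ≤ ENNReal.ofReal ((2 * δ) ^ (s - Fintype.card ι)) * C :=
    fun δ ⟨hδ, hδ1⟩ => (packingPremeasure_le_mul_volume_cthickening hs.le hδ A).trans
      (mul_le_mul_right (measure_mono (cthickening_mono hδ1 A)) _)
  have hlim : Tendsto (fun δ : ℝ => ENNReal.ofReal ((2 * δ) ^ (s - Fintype.card ι)) * C)
      (𝓝 0) (𝓝 0) := by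
    have hcont : ContinuousAt (fun δ : ℝ => (2 * δ) ^ (s - Fintype.card ι)) 0 :=
      (continuous_const.mul continuous_id).continuousAt.rpow_const (Or.inr (by linarith))
    have h := (ENNReal.continuous_ofReal.tendsto _).comp hcont.tendsto
    simpa [Real.zero_rpow (sub_pos.2 hs).ne'] using ENNReal.Tendsto.mul_const h (Or.inr hC)
  exact le_antisymm (ge_of_tendsto (hlim.mono_left nhdsWithin_le_nhds)
    (eventually_of_mem (Ioc_mem_nhdsGT one_pos) hbound)) bot_le

lemma packingMeasure_eq_zero_of_lt {s : ℝ} (hs : (Fintype.card ι : ℝ) < s) (A : Set (ι → ℝ)) :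
    packingMeasure s A = 0 := by
  have hcov : A ⊆ ⋃ k : ℕ, closedBall (0 : ι → ℝ) k := fun x _ =>
    mem_iUnion.2 ((exists_nat_ge (dist x 0)).imp fun _ => mem_closedBall.2)
  refine le_antisymm ((iInf₂_le (fun k : ℕ => closedBall (0 : ι → ℝ) k) hcov).trans ?_)
    bot_le
  simp [packingPremeasure_eq_zero_of_isBounded hs isBounded_closedBall]

lemma exists_grid_in_ball (x : ι → ℝ) {ρ : ℝ} (hρ : 0 < ρ) (m : ℕ) :
    ∃ f : (ι → Fin m) → ι → ℝ, (∀ k, f k ∈ ball x ρ) ∧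
      Pairwise fun k l => ρ / m ≤ dist (f k) (f l) := by
  refine ⟨fun k i => x i + ρ / m * (k i : ℕ), fun k => ?_, fun k l hkl => ?_⟩
  · rw [mem_ball, dist_pi_lt_iff hρ]
    intro i
    have hm : 0 < m := Fin.pos (k i)
    have hki : ((k i : ℕ) : ℝ) < m := by exact_mod_cast (k i).isLt
    rw [Real.dist_eq, add_sub_cancel_left, abs_of_nonneg (by positivity)]
    calc ρ / m * (k i : ℕ) < ρ / m * m := by gcongr
      _ = ρ := div_mul_cancel₀ ρ (by positivity)
  · obtain ⟨i, hi⟩ := Function.ne_iff.1 hkl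
    have hki : (1 : ℝ) ≤ |((k i : ℕ) : ℝ) - (l i : ℕ)| := by
      have hne : ((k i : ℕ) : ℤ) - (l i : ℕ) ≠ 0 :=
        sub_ne_zero.2 (by exact_mod_cast Fin.val_ne_of_ne hi)
      exact_mod_cast Int.one_le_abs hne
    calc ρ / m ≤ ρ / m * |((k i : ℕ) : ℝ) - (l i : ℕ)| :=
          le_mul_of_one_le_right (by positivity) hki
      _ = dist (x i + ρ / m * (k i : ℕ)) (x i + ρ / m * (l i : ℕ)) := by
        rw [Real.dist_eq, add_sub_add_left_eq_sub, ← mul_sub, abs_mul,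
          abs_of_nonneg (div_nonneg hρ.le m.cast_nonneg)]
      _ ≤ _ := dist_le_pi_dist (fun i => x i + ρ / m * (k i : ℕ))
        (fun i => x i + ρ / m * (l i : ℕ)) i

lemma exists_separated_finset_of_ball_subset_closure {E : Set (ι → ℝ)}
    {x : ι → ℝ} {ρ : ℝ} (hρ : 0 < ρ) (hE : ball x ρ ⊆ closure E) {m : ℕ} (hm : 0 < m) :
    ∃ t : Finset (ι → ℝ), ↑t ⊆ E ∧ t.card = m ^ Fintype.card ι ∧
      (t : Set (ι → ℝ)).Pairwise fun y z => 2 * (ρ / (4 * m)) < dist y z := by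
  classical
  obtain ⟨f, hfx, hfsep⟩ := exists_grid_in_ball x hρ m
  have h4r : 4 * (ρ / (4 * m)) = ρ / m := by field_simp
  obtain ⟨g, hgE, hgsep⟩ := exists_separated_of_subset_closure (fun k => hE (hfx k))
    (by positivity : 0 < ρ / (4 * m)) (h4r ▸ hfsep)
  have hg : Function.Injective g := fun k l hkl => by
    by_contra hne
    have hgkl : 2 * (ρ / (4 * m)) < dist (g k) (g l) := hgsep hne
    rw [hkl, dist_self] at hgkl
    exact hgkl.not_ge (by positivity)
  refine ⟨Finset.univ.map ⟨g, hg⟩, ?_, ?_, ?_⟩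
  · simpa [Set.range_subset_iff] using hgE
  · simp
  · simpa using Pairwise.range_pairwise hgsep

lemma packingPremeasure_eq_top_of_ball_subset_closure {s : ℝ}
    (hs : s < Fintype.card ι) {E : Set (ι → ℝ)} {x : ι → ℝ} {ρ : ℝ} (hρ : 0 < ρ)
    (hE : ball x ρ ⊆ closure E) : packingPremeasure s E = ⊤ := by
  refine packingPremeasure_eq_top_of_forall_exists_separated fun δ hδ M => ?_
  have hmass : Tendsto (fun m : ℕ => (ρ / 2) ^ s * (m : ℝ) ^ ((Fintype.card ι : ℝ) - s))
      atTop atTop :=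
    ((tendsto_rpow_atTop (sub_pos.2 hs)).comp tendsto_natCast_atTop_atTop).const_mul_atTop
      (by positivity)
  have hradius : Tendsto (fun m : ℕ => ρ / (4 * m)) atTop (𝓝 0) :=
    tendsto_const_nhds.div_atTop
      (tendsto_natCast_atTop_atTop.const_mul_atTop (by norm_num : (0 : ℝ) < 4))
  obtain ⟨m, hm, hmδ, hmM⟩ := ((eventually_gt_atTop 0).and
    ((hradius.eventually (eventually_le_nhds hδ)).and (hmass.eventually_ge_atTop M))).exists
  obtain ⟨t, htE, htcard, htsep⟩ := exists_separated_finset_of_ball_subset_closure hρ hE hm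
  refine ⟨ρ / (4 * m), by positivity, hmδ, t, htE, htsep, hmM.trans_eq ?_⟩
  have hm' : (0 : ℝ) < m := by exact_mod_cast hm
  rw [htcard, Nat.cast_pow, show 2 * (ρ / (4 * m)) = ρ / 2 / m by field_simp; ring,
    Real.div_rpow (by positivity) hm'.le, Real.rpow_sub hm', Real.rpow_natCast]
  field_simp

lemma packingMeasure_eq_top_of_mem_residual {s : ℝ}
    (hs : s < Fintype.card ι) {A : Set (ι → ℝ)} (hA : A ∈ residual (ι → ℝ)) :
    packingMeasure s A = ⊤ := by
  refine iInf₂_eq_top.2 fun E hcov => ENNReal.tsum_eq_top_of_eq_top ?_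
  obtain ⟨k, x, hx⟩ := exists_nonempty_interior_closure_of_mem_residual hA hcov
  obtain ⟨ρ, hρ, hball⟩ := Metric.isOpen_iff.1 isOpen_interior x hx
  exact ⟨k, packingPremeasure_eq_top_of_ball_subset_closure hs hρ (hball.trans interior_subset)⟩

end Euclidean

lemma setOf_forall_liouville_mem_residual (ι : Type*) [Countable ι] :
    {x : ι → ℝ | ∀ i, Liouville (x i)} ∈ residual (ι → ℝ) :=
  eventually_countable_forall.2 fun i =>
    (tendsto_residual_of_isOpenMap (continuous_apply i) (isOpenMap_eval i)).eventually
      eventually_residual_liouville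

theorem packingDim_liouville_pi_general (n : ℕ) :
    packingDim {x : Fin n → ℝ | ∀ i, Liouville (x i)} = (n : ENNReal) := by
  refine le_antisymm ?_ (le_packingDim_of_forall_lt fun s hs => ?_)
  · exact ENNReal.coe_natCast n ▸ packingDim_le_of_forall_lt fun s hs =>
      packingMeasure_eq_zero_of_lt (by rw [Fintype.card_fin]; exact_mod_cast hs) _
  · rw [packingMeasure_eq_top_of_mem_residual (by rw [Fintype.card_fin]; exact_mod_cast hs)
      (setOf_forall_liouville_mem_residual (Fin n))]
    exact ENNReal.top_ne_zero

/-- For any integer `n ≥ 1`, the `n`-fold Cartesian product of the set of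
Liouville numbers has packing dimension exactly `n`. -/
theorem packingDim_liouville_pi (n : ℕ) (hn : 1 ≤ n) :
    packingDim {x : Fin n → ℝ | ∀ i, Liouville (x i)} = (n : ENNReal) :=
  packingDim_liouville_pi_general n
end

section
/- If ξ is real and p/q is a rational number in lowest terms with q ≥ 1 satisfying |ξ - p/q| < 1/(2q²), then p/q is a convergent of the continued fraction expansion of ξ (Legendre's theorem). -/
/-- Legendre's theorem: if `p/q` is in lowest terms with `q ≥ 1` and
`|ξ - p/q| < 1/(2q²)`, then `p/q` is a convergent of the continued fraction
expansion of `ξ`. -/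
theorem legendre_convergent (ξ : ℝ) (p : ℤ) (q : ℕ) (hq : 1 ≤ q)
    (hcop : p.natAbs.Coprime q)
    (happrox : |ξ - (p : ℝ) / q| < 1 / (2 * (q : ℝ) ^ 2)) :
    ∃ k : ℕ, (GenContFract.of ξ).convs k = (p : ℝ) / q := by
  let r : ℚ := ⟨p, q, by omega, hcop⟩
  have hr : (r : ℝ) = p / q := Rat.cast_mk' ..
  obtain ⟨k, hk⟩ := Real.exists_convs_eq_rat (q := r) (hr ▸ happrox)
  exact ⟨k, hk ▸ hr⟩
end

section
/- For λ₀, λ₁ ∈ ((5+√17)/2, ∞], the product 𝒲_{λ₀} × 𝒲_{λ₁} has Hausdorff dimension at most 1 + 2/max{λ₀, λ₁}. -/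
/-!
For `0 < μ` with `μ < λ`, every `ξ ∈ 𝒲_λ` lies in infinitely many intervals
`[p/q - q^{-μ}, p/q + q^{-μ}]`. For each of the `≍ q` fractions `p/q` of a bounded window, the
strip `[-N, N] × [p/q - q^{-μ}, p/q + q^{-μ}]` is covered by `≍ q^μ` balls of radius `q^{-μ}`,
so the `d`-dimensional sums of the covers are `≍ ∑_q q^{1 + μ - μd}`, finite once
`d > 1 + 2/μ`. A Hausdorff–Cantelli argument then makes `ℝ × 𝒲_λ` null for `μH[d]`, hence
`dimH (ℝ × 𝒲_λ) ≤ 1 + 2/μ`; let `μ ↑ λ`, and swap the factors when `λ₀ > λ₁`.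
-/

open MeasureTheory Pointwise

/-- The irrationality exponent of a real number `ξ`, as an extended nonnegative
real: the supremum of all `μ ≥ 0` such that `|ξ - p/q| ≤ q^{-μ}` holds for
infinitely many rational numbers `p/q`. -/
noncomputable def irrExp (ξ : ℝ) : ENNReal :=
  sSup (ENNReal.ofReal ''
    {μ : ℝ | {r : ℚ | |ξ - (r : ℝ)| ≤ (r.den : ℝ) ^ (-μ)}.Infinite})

/-- The set `𝒲_λ` of real numbers with irrationality exponent exactly `λ`. -/
def Wexact (lam : ENNReal) : Set ℝ := {ξ : ℝ | irrExp ξ = lam}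

/-- The set `𝒲_{λ;μ}` of real numbers with irrationality exponent in `[λ, μ]`. -/
def Wrange (lam mu : ENNReal) : Set ℝ := {ξ : ℝ | lam ≤ irrExp ξ ∧ irrExp ξ ≤ mu}

open Set Filter Metric
open scoped ENNReal Topology

theorem hausdorffMeasure_limsup_cofinite_eq_zero {X ι : Type*} [EMetricSpace X]
    [MeasurableSpace X] [BorelSpace X] [Countable ι] {d : ℝ} (hd : 0 < d) {E : ι → Set X}
    (hE : ∑' i, ediam (E i) ^ d ≠ ∞) : μH[d] (limsup E cofinite) = 0 := by
  -- The tail sums serve as covering scales: each set of a tail has diameter at most the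
  -- `d`-th root of the tail.
  set tail : Finset ι → ℝ≥0∞ := fun F => ∑' i : {i // i ∉ F}, ediam (E i) ^ d
  have htail : Tendsto tail atTop (𝓝 0) := ENNReal.tendsto_tsum_compl_atTop_zero hE
  refine le_antisymm ?_ bot_le
  calc μH[d] (limsup E cofinite)
      ≤ liminf tail atTop := by
        refine Measure.hausdorffMeasure_le_liminf_tsum d _ (fun F => tail F ^ d⁻¹) ?_
          (fun F (i : {i // i ∉ F}) => E i) (.of_forall fun F i => ?_) (.of_forall fun F => ?_)
        · have := (ENNReal.continuous_rpow_const (y := d⁻¹)).tendsto 0 |>.comp htail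
          rwa [ENNReal.zero_rpow_of_pos (inv_pos.2 hd)] at this
        · rw [← ENNReal.rpow_le_rpow_iff hd, ENNReal.rpow_inv_rpow hd.ne']
          exact ENNReal.le_tsum (f := fun i : {i // i ∉ F} => ediam (E i) ^ d) i
        · rw [hasBasis_cofinite.limsup_eq_iInf_iSup, iUnion_subtype]
          exact iInter₂_subset _ F.finite_toSet
    _ = 0 := htail.liminf_eq

def wellApprox (μ : ℝ) : Set ℝ :=
  limsup (fun r : ℚ => closedBall (r : ℝ) ((r.den : ℝ) ^ (-μ))) cofinite

theorem mem_wellApprox_iff {μ ξ : ℝ} :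
    ξ ∈ wellApprox μ ↔ {r : ℚ | |ξ - r| ≤ (r.den : ℝ) ^ (-μ)}.Infinite := by
  simp only [wellApprox, cofinite.limsup_set_eq, mem_ofPred_eq, mem_closedBall, Real.dist_eq]

theorem wellApprox_anti : Antitone wellApprox := fun μ μ' h =>
  limsup_le_limsup <| .of_forall fun r => closedBall_subset_closedBall <|
    Real.rpow_le_rpow_of_exponent_le (by exact_mod_cast r.pos) (neg_le_neg h)

theorem Wexact_subset_wellApprox {lam : ℝ≥0∞} {μ : ℝ} (h : ENNReal.ofReal μ < lam) :
    Wexact lam ⊆ wellApprox μ := by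
  intro ξ (hξ : irrExp ξ = lam)
  rw [← hξ, irrExp, lt_sSup_iff] at h
  obtain ⟨-, ⟨μ', hμ', rfl⟩, hlt⟩ := h
  exact wellApprox_anti ((ENNReal.ofReal_lt_ofReal_iff'.1 hlt).1.le) (mem_wellApprox_iff.2 hμ')

/-- `⟨q, (p, j)⟩` indexes the `j`-th ball of radius `q ^ (-μ)` along the strip
`[-N, N] × closedBall (p / q) (q ^ (-μ))`. -/
noncomputable def stripCoverIndex (μ : ℝ) (N q : ℕ) : Finset (ℤ × ℕ) :=
  Finset.Icc (-((N + 1) * q : ℕ) : ℤ) ((N + 1) * q : ℕ) ×ˢ Finset.range (⌊N * (q : ℝ) ^ μ⌋₊ + 1)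

def stripCover (μ : ℝ) (N : ℕ) (i : Σ q, stripCoverIndex μ N q) : Set (ℝ × ℝ) :=
  closedBall (-N + (2 * i.2.1.2 + 1) * (i.1 : ℝ) ^ (-μ), (i.2.1.1 : ℝ) / i.1) ((i.1 : ℝ) ^ (-μ))

theorem exists_mem_stripCover {μ x ξ : ℝ} (hμ : 0 ≤ μ) {N : ℕ} (hx : x ∈ Icc (-N : ℝ) N)
    (hξ : |ξ| ≤ N) {r : ℚ} (hr : |ξ - r| ≤ (r.den : ℝ) ^ (-μ)) :
    ∃ i, (x, ξ) ∈ stripCover μ N i ∧ i.1 = r.den ∧ i.2.1.1 = r.num := by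
  set q : ℕ := r.den
  have hq : (1 : ℝ) ≤ q := by exact_mod_cast r.pos
  set ρ : ℝ := (q : ℝ) ^ (-μ)
  have hρ0 : 0 < ρ := by positivity
  have hρ1 : ρ ≤ 1 := Real.rpow_le_one_of_one_le_of_nonpos hq (neg_nonpos.2 hμ)
  have hρinv : ρ * (q : ℝ) ^ μ = 1 := by
    rw [← Real.rpow_add (by positivity), neg_add_cancel, Real.rpow_zero]
  have hxN : 0 ≤ (x + N) / (2 * ρ) := div_nonneg (by linarith [hx.1]) (by positivity)
  set j : ℕ := ⌊(x + N) / (2 * ρ)⌋₊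
  have hj : 2 * ρ * j ≤ x + N ∧ x + N < 2 * ρ * (j + 1) := by
    rw [← le_div_iff₀' (by positivity), ← div_lt_iff₀' (by positivity)]
    exact ⟨Nat.floor_le hxN, Nat.lt_floor_add_one _⟩
  have hnum : |(r.num : ℝ)| ≤ (N + 1) * q := by
    have habs : |(r : ℝ)| ≤ N + 1 := by
      calc |(r : ℝ)| = |ξ - (ξ - r)| := by rw [sub_sub_cancel]
        _ ≤ |ξ| + |ξ - r| := abs_sub _ _
        _ ≤ N + 1 := add_le_add hξ (hr.trans hρ1)
    rw [Rat.cast_def, abs_div, Nat.abs_cast] at habs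
    rwa [div_le_iff₀ (by positivity)] at habs
  have hjmax : (x + N) / (2 * ρ) ≤ N * (q : ℝ) ^ μ := by
    rw [div_le_iff₀ (by positivity)]
    nlinarith [hx.2]
  refine ⟨⟨q, (r.num, j), ?_⟩, ?_, rfl, rfl⟩
  · simp only [stripCoverIndex, Finset.mem_product, Finset.mem_Icc, Finset.mem_range, ← abs_le]
    refine ⟨by exact_mod_cast hnum, Nat.lt_succ_of_le (Nat.floor_le_floor hjmax)⟩
  · rw [stripCover, mem_closedBall, Prod.dist_eq, Real.dist_eq, Real.dist_eq, ← Rat.cast_def]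
    exact max_le (abs_le.2 ⟨by linarith, by linarith⟩) hr

theorem Icc_prod_wellApprox_subset_limsup_stripCover {μ : ℝ} (hμ : 0 ≤ μ) (N : ℕ) :
    Icc (-N : ℝ) N ×ˢ (wellApprox μ ∩ Icc (-N : ℝ) N) ⊆ limsup (stripCover μ N) cofinite := by
  rintro ⟨x, ξ⟩ ⟨hx, hξ, hξN⟩
  rw [cofinite.limsup_set_eq]
  refine Set.Infinite.of_image (fun i => (i.2.1.1 : ℚ) / i.1) ((mem_wellApprox_iff.1 hξ).mono ?_)
  intro r hr
  obtain ⟨i, hi, hq, hp⟩ := exists_mem_stripCover hμ hx (abs_le.2 hξN) hr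
  exact ⟨i, hi, by simp only [hq, hp, Rat.num_div_den]⟩

theorem card_stripCoverIndex_le {μ : ℝ} (hμ : 0 ≤ μ) (N : ℕ) {q : ℕ} (hq : 1 ≤ q) :
    ((stripCoverIndex μ N q).card : ℝ) ≤ (2 * N + 3) * (N + 1) * (q : ℝ) ^ (1 + μ) := by
  have hq' : (1 : ℝ) ≤ q := by exact_mod_cast hq
  have hqμ : 1 ≤ (q : ℝ) ^ μ := Real.one_le_rpow hq' hμ
  have hfloor := Nat.floor_le (by positivity : 0 ≤ (N : ℝ) * (q : ℝ) ^ μ)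
  rw [stripCoverIndex, Finset.card_product, Int.card_Icc, Finset.card_range,
    Real.rpow_add (by positivity), Real.rpow_one,
    show ∀ m : ℕ, ((m : ℤ) + 1 - -(m : ℤ)).toNat = 2 * m + 1 by omega]
  push_cast
  calc (2 * ((N + 1) * q) + 1 : ℝ) * (⌊N * (q : ℝ) ^ μ⌋₊ + 1)
      ≤ ((2 * N + 3) * q) * ((N + 1) * (q : ℝ) ^ μ) := by
        gcongr <;> nlinarith
    _ = (2 * N + 3) * (N + 1) * (q * (q : ℝ) ^ μ) := by ring

theorem ediam_stripCover_le (μ : ℝ) (N : ℕ) (i : Σ q, stripCoverIndex μ N q) :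
    ediam (stripCover μ N i) ≤ ENNReal.ofReal (2 * (i.1 : ℝ) ^ (-μ)) := by
  rw [stripCover, ← closedEBall_ofReal (by positivity), ENNReal.ofReal_mul zero_le_two,
    ENNReal.ofReal_ofNat]
  exact ediam_closedEBall_le

theorem card_stripCoverIndex_mul_le {μ d : ℝ} (hμ : 0 < μ) (hd : 2 < μ * (d - 1)) (N q : ℕ) :
    ((stripCoverIndex μ N q).card : ℝ) * (2 * (q : ℝ) ^ (-μ)) ^ d ≤
      (2 * N + 3) * (N + 1) * 2 ^ d * (q : ℝ) ^ (1 + μ - μ * d) := by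
  have hd0 : 0 < d := by nlinarith
  rcases Nat.eq_zero_or_pos q with rfl | hq
  · rw [Nat.cast_zero, Real.zero_rpow (neg_ne_zero.2 hμ.ne'), mul_zero, Real.zero_rpow hd0.ne',
      Real.zero_rpow (by nlinarith), mul_zero, mul_zero]
  have hq0 : (0 : ℝ) < q := by exact_mod_cast hq
  calc ((stripCoverIndex μ N q).card : ℝ) * (2 * (q : ℝ) ^ (-μ)) ^ d
      ≤ ((2 * N + 3) * (N + 1) * (q : ℝ) ^ (1 + μ)) * (2 ^ d * (q : ℝ) ^ (-μ * d)) := by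
        rw [Real.mul_rpow zero_le_two (by positivity), ← Real.rpow_mul hq0.le]
        gcongr
        exact card_stripCoverIndex_le hμ.le N hq
    _ = (2 * N + 3) * (N + 1) * 2 ^ d * (q : ℝ) ^ (1 + μ - μ * d) := by
        rw [show 1 + μ - μ * d = (1 + μ) + -μ * d by ring, Real.rpow_add hq0 (1 + μ)]
        ring

theorem tsum_ediam_stripCover_rpow_ne_top {μ d : ℝ} (hμ : 0 < μ) (hd : 2 < μ * (d - 1)) (N : ℕ) :
    ∑' i, ediam (stripCover μ N i) ^ d ≠ ∞ := by
  have hd0 : 0 < d := by nlinarith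
  set C : ℝ := (2 * N + 3) * (N + 1) * 2 ^ d
  have hsum : Summable fun q : ℕ => C * (q : ℝ) ^ (1 + μ - μ * d) :=
    (Real.summable_nat_rpow.2 (by linarith)).mul_left C
  have hfiber (q : ℕ) : ∑' x : stripCoverIndex μ N q, ediam (stripCover μ N ⟨q, x⟩) ^ d ≤
      ENNReal.ofReal (C * (q : ℝ) ^ (1 + μ - μ * d)) := by
    calc ∑' x : stripCoverIndex μ N q, ediam (stripCover μ N ⟨q, x⟩) ^ d
        ≤ ∑' _ : stripCoverIndex μ N q, ENNReal.ofReal ((2 * (q : ℝ) ^ (-μ)) ^ d) :=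
          ENNReal.tsum_le_tsum fun x => (ENNReal.rpow_le_rpow (ediam_stripCover_le μ N ⟨q, x⟩)
            hd0.le).trans_eq (ENNReal.ofReal_rpow_of_nonneg (by positivity) hd0.le)
      _ = ENNReal.ofReal ((stripCoverIndex μ N q).card * (2 * (q : ℝ) ^ (-μ)) ^ d) := by
          rw [tsum_fintype, Finset.sum_const, Finset.card_univ, Fintype.card_coe, nsmul_eq_mul,
            ENNReal.ofReal_mul (by positivity), ENNReal.ofReal_natCast]
      _ ≤ ENNReal.ofReal (C * (q : ℝ) ^ (1 + μ - μ * d)) :=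
          ENNReal.ofReal_le_ofReal (card_stripCoverIndex_mul_le hμ hd N q)
  refine ne_top_of_le_ne_top ?_ ((ENNReal.tsum_sigma' _).trans_le (ENNReal.tsum_le_tsum hfiber))
  rw [← ENNReal.ofReal_tsum_of_nonneg (fun q => by positivity) hsum]
  exact ENNReal.ofReal_ne_top

theorem hausdorffMeasure_univ_prod_wellApprox_eq_zero {μ d : ℝ} (hμ : 0 < μ)
    (hd : 2 < μ * (d - 1)) : μH[d] ((univ : Set ℝ) ×ˢ wellApprox μ) = 0 := by
  have hcover : (univ : Set ℝ) ×ˢ wellApprox μ ⊆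
      ⋃ N : ℕ, Icc (-N : ℝ) N ×ˢ (wellApprox μ ∩ Icc (-N : ℝ) N) := by
    rintro ⟨x, ξ⟩ ⟨-, hξ⟩
    obtain ⟨N, hN⟩ := exists_nat_ge (max |x| |ξ|)
    exact mem_iUnion.2 ⟨N, abs_le.1 ((le_max_left _ _).trans hN), hξ,
      abs_le.1 ((le_max_right _ _).trans hN)⟩
  refine measure_mono_null hcover (measure_iUnion_null fun N => measure_mono_null
    (Icc_prod_wellApprox_subset_limsup_stripCover hμ.le N) ?_)
  exact hausdorffMeasure_limsup_cofinite_eq_zero (by nlinarith)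
    (tsum_ediam_stripCover_rpow_ne_top hμ hd N)

theorem dimH_univ_prod_wellApprox_le {μ : ℝ} (hμ : 0 < μ) :
    dimH ((univ : Set ℝ) ×ˢ wellApprox μ) ≤ 1 + 2 / ENNReal.ofReal μ := by
  rw [← ENNReal.ofReal_ofNat, ← ENNReal.ofReal_div_of_pos hμ, ← ENNReal.ofReal_one,
    ← ENNReal.ofReal_add zero_le_one (by positivity)]
  refine dimH_le fun d hd => ?_
  rw [← ENNReal.ofReal_coe_nnreal]
  refine ENNReal.ofReal_le_ofReal (not_lt.1 fun hlt => ?_)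
  have h2 : 2 < μ * ((d : ℝ) - 1) := by
    have : 2 / μ < d - 1 := by linarith
    rw [div_lt_iff₀ hμ] at this
    linarith
  simp [hausdorffMeasure_univ_prod_wellApprox_eq_zero hμ h2] at hd

theorem dimH_prod_Wexact_le (A : Set ℝ) (lam : ℝ≥0∞) : dimH (A ×ˢ Wexact lam) ≤ 1 + 2 / lam := by
  rcases eq_or_ne lam 0 with rfl | hlam
  · simp [ENNReal.div_zero two_ne_zero]
  have hcont : Continuous fun t : ℝ≥0∞ => 1 + 2 / t := by
    simp only [div_eq_mul_inv]
    exact continuous_const.add ((ENNReal.continuous_const_mul ENNReal.ofNat_ne_top).comp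
      continuous_inv)
  have := nhdsLT_neBot_of_exists_lt ⟨0, pos_iff_ne_zero.2 hlam⟩
  refine ge_of_tendsto (hcont.continuousWithinAt (s := Iio lam) (x := lam))
    (eventually_nhdsWithin_of_forall fun t (ht : t < lam) => ?_)
  rcases eq_or_ne t 0 with rfl | ht0
  · simp [ENNReal.div_zero two_ne_zero]
  have hμ : ENNReal.ofReal t.toReal = t := ENNReal.ofReal_toReal ht.ne_top
  calc dimH (A ×ˢ Wexact lam) ≤ dimH ((univ : Set ℝ) ×ˢ wellApprox t.toReal) :=
        dimH_mono (Set.prod_mono (subset_univ A) (Wexact_subset_wellApprox (hμ.symm ▸ ht)))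
    _ ≤ 1 + 2 / ENNReal.ofReal t.toReal :=
        dimH_univ_prod_wellApprox_le (ENNReal.toReal_pos ht0 ht.ne_top)
    _ = 1 + 2 / t := by rw [hμ]

theorem dimH_Wexact_prod_le_general (lam0 lam1 : ENNReal) :
    dimH (Wexact lam0 ×ˢ Wexact lam1) ≤ 1 + 2 / max lam0 lam1 := by
  rcases le_total lam0 lam1 with hle | hle
  · rw [max_eq_right hle]
    exact dimH_prod_Wexact_le _ lam1
  · have hswap : Isometry (Prod.swap : ℝ × ℝ → ℝ × ℝ) := fun p q => by
      simp only [Prod.edist_eq, Prod.fst_swap, Prod.snd_swap, max_comm]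
    rw [max_eq_left hle, ← image_swap_prod, hswap.dimH_image]
    exact dimH_prod_Wexact_le _ lam0

/-- If `λ₀, λ₁ > (5+√17)/2`, then `𝒲_{λ₀} × 𝒲_{λ₁}` has Hausdorff dimension at
most `1 + 2 / max{λ₀, λ₁}`. -/
theorem dimH_Wexact_prod_le (lam0 lam1 : ENNReal)
    (h0 : ENNReal.ofReal ((5 + Real.sqrt 17) / 2) < lam0)
    (h1 : ENNReal.ofReal ((5 + Real.sqrt 17) / 2) < lam1) :
    dimH (Wexact lam0 ×ˢ Wexact lam1) ≤ 1 + 2 / max lam0 lam1 :=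
  dimH_Wexact_prod_le_general lam0 lam1
end
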